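/- Let K = ⋃_{ℓ=1}^L [a_ℓ, b_ℓ] ⊆ [−1,1] with −1 = a_1 < b_1 < a_2 < ⋯ < a_L < b_L = 1, let w be continuous and strictly positive on K, and let N ≥ 1. Let d ≥ N, let V_d be any monic polynomial of degree N minimizing sslash · sslash_d among monic polynomials of degree N, and let U be any monic polynomial of degree N minimizing ‖P/w‖_{L1(K)} among monic polynomials of degree N. Then sslash V_d sslash_d ≤ ‖U/w‖_{L1(K)} ≤ ‖V_d/w‖_{L1(K)}. -/

import Mathlib

open MeasureTheory Filter Polynomial

/-- The `(d+1) × (d+1)` symmetric Toeplitz matrix built from a vector `y ∈ ℝ^{d+1}`,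
with entries `y_{|i−j|}`. -/
noncomputable def toepFin (d : ℕ) (y : Fin (d + 1) → ℝ) :
    Matrix (Fin (d + 1)) (Fin (d + 1)) ℝ :=
  fun i j => y ⟨(((i : ℕ) : ℤ) - ((j : ℕ) : ℤ)).natAbs, by omega⟩

/-- The transplantation `P_ℓ(x) = P(((bℓ−aℓ)x + aℓ + bℓ)/2)` of a polynomial
from `[aℓ, bℓ]` to `[-1, 1]`. -/
noncomputable def transplant (aℓ bℓ : ℝ) (P : Polynomial ℝ) : Polynomial ℝ :=
  P.comp (Polynomial.C ((bℓ - aℓ) / 2) * Polynomial.X + Polynomial.C ((aℓ + bℓ) / 2))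

/-- The entries `J^ℓ_{k,n} = ∫_0^π cos(kθ) sin((n+1)θ) / w_ℓ(cos θ) dθ`, where
`w_ℓ(x) = w(((bℓ−aℓ)x + aℓ + bℓ)/2)` is the transplantation of the weight `w`. -/
noncomputable def Jent (aℓ bℓ : ℝ) (w : ℝ → ℝ) (k n : ℕ) : ℝ :=
  ∫ θ in (0:ℝ)..Real.pi,
    Real.cos (k * θ) * Real.sin ((n + 1) * θ) /
      w (((bℓ - aℓ) * Real.cos θ + aℓ + bℓ) / 2)

/-- The weighted `L1` norm `‖P/w‖_{L1(K)} = ∑_ℓ ∫_{a_ℓ}^{b_ℓ} |P(t)|/w(t) dt`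
on `K = ⋃_{ℓ<L} [a ℓ, b ℓ]`. -/
noncomputable def L1K (L : ℕ) (a b : ℕ → ℝ) (w : ℝ → ℝ) (P : Polynomial ℝ) : ℝ :=
  ∑ ℓ ∈ Finset.range L, ∫ t in (a ℓ)..(b ℓ), |P.eval t| / w t

/-- The ersatz norm `⫽P⫽_d`: the infimum of
`∑_ℓ ((b_ℓ−a_ℓ)/2)(y^{ℓ,+}_0 + y^{ℓ,−}_0)` over vectors `y^{ℓ,±} ∈ ℝ^{d+1}` with
`y^{ℓ,+} − y^{ℓ,−} = J^{ℓ,d} W^ℓ p` and `Toep_d(y^{ℓ,±}) ⪰ 0`, where `q ℓ = W^ℓ p` is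
the vector of second-kind Chebyshev coefficients of the transplantation `P_ℓ`. -/
noncomputable def ersatz (L N d : ℕ) (a b : ℕ → ℝ) (w : ℝ → ℝ) (P : Polynomial ℝ) : ℝ :=
  sInf { s : ℝ |
    ∃ q : ℕ → Fin (N + 1) → ℝ,
      (∀ ℓ < L, transplant (a ℓ) (b ℓ) P
          = ∑ n : Fin (N + 1), Polynomial.C (q ℓ n) * Polynomial.Chebyshev.U ℝ ((n : ℕ) : ℤ)) ∧
      ∃ yp ym : ℕ → Fin (d + 1) → ℝ,
        (∀ ℓ < L, ∀ k : Fin (d + 1),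
            yp ℓ k - ym ℓ k
              = ∑ n : Fin (N + 1), Jent (a ℓ) (b ℓ) w (k : ℕ) (n : ℕ) * q ℓ n) ∧
        (∀ ℓ < L, (toepFin d (yp ℓ)).PosSemidef ∧ (toepFin d (ym ℓ)).PosSemidef) ∧
        s = ∑ ℓ ∈ Finset.range L, ((b ℓ - a ℓ) / 2) * (yp ℓ 0 + ym ℓ 0) }

/-!
The second inequality is the minimality of `U`. For the first, `⫽V⫽_d ≤ ⫽U⫽_d` by minimality of
`V`, and `⫽P⫽_d ≤ ‖P/w‖_{L1(K)}` for every `P` of degree at most `N`, witnessed on each interval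
by the cosine moments of the positive and negative parts of
`F(θ) = P_ℓ(cos θ) sin θ / w_ℓ(cos θ) = ∑ₙ qₙ sin((n+1)θ) / w_ℓ(cos θ)`.
Their difference is `J^{ℓ,d} W^ℓ p` by the identity `Uₙ(cos θ) sin θ = sin((n+1)θ)`; a Toeplitz
matrix of cosine moments of a nonnegative function is positive semidefinite, its quadratic form
being `∫ |∑ₖ xₖ e^{ikθ}|² g`; and the zeroth moments add up to `∫₀^π |F|`, which the substitution
`t = ((b−a) cos θ + a + b)/2` turns into `(2/(b−a)) ∫ₐᵇ |P|/w`.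
-/

open Real Set

namespace Polynomial.Chebyshev

theorem exists_sum_C_mul_U_eq {R : Type*} [Field R] [NeZero (2 : R)] {N : ℕ} {P : R[X]}
    (hP : P.natDegree ≤ N) :
    ∃ q : Fin (N + 1) → R, P = ∑ n : Fin (N + 1), Polynomial.C (q n) * U R ((n : ℕ) : ℤ) := by
  let S : Sequence R := ⟨fun n => U R n, degree_U_natCast R⟩
  have hspan : Submodule.span R (range fun n : Fin (N + 1) => S n) = degreeLT R (N + 1) := by
    rw [← S.span_degreeLT fun n _ => by simp [S, two_ne_zero], ← Fin.range_val, ← range_comp]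
    rfl
  have hmem : P ∈ degreeLT R (N + 1) :=
    mem_degreeLT.2 <| degree_le_natDegree.trans_lt (by exact_mod_cast Nat.lt_succ_of_le hP)
  rw [← hspan, Submodule.mem_span_range_iff_exists_fun] at hmem
  obtain ⟨q, hq⟩ := hmem
  exact ⟨q, by simp [← hq, S, smul_eq_C_mul]⟩

end Polynomial.Chebyshev

section Substitution

variable {α β : ℝ}

noncomputable def affineCos (α β θ : ℝ) : ℝ := ((β - α) * cos θ + α + β) / 2

lemma continuous_affineCos : Continuous (affineCos α β) := by
  unfold affineCos
  fun_prop

lemma affineCos_mem_Icc (h : α ≤ β) (θ : ℝ) : affineCos α β θ ∈ Icc α β := by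
  have := neg_one_le_cos θ
  have := cos_le_one θ
  constructor <;> unfold affineCos <;> nlinarith

lemma eval_transplant_cos (P : ℝ[X]) (θ : ℝ) :
    (transplant α β P).eval (cos θ) = P.eval (affineCos α β θ) := by
  simp only [transplant, eval_comp, eval_add, eval_mul, eval_C, eval_X, affineCos]
  ring_nf

lemma natDegree_transplant_le (P : ℝ[X]) : (transplant α β P).natDegree ≤ P.natDegree :=
  natDegree_comp_le.trans <| by
    simpa using Nat.mul_le_mul_left P.natDegree (natDegree_linear_le (b := (α + β) / 2))

theorem integral_comp_affineCos_mul_sin (h : α ≤ β) (f : ℝ → ℝ) :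
    (β - α) / 2 * ∫ θ in 0..π, f (affineCos α β θ) * sin θ = ∫ t in α..β, f t := by
  have hderiv : ∀ θ, HasDerivAt (affineCos α β) (-((β - α) / 2 * sin θ)) θ := fun θ => by
    have := (((hasDerivAt_cos θ).const_mul (β - α)).add_const α).add_const β |>.div_const 2
    exact this.congr_deriv (by ring)
  have hnonpos : ∀ θ ∈ Ioo (min 0 π) (max 0 π), -((β - α) / 2 * sin θ) ≤ 0 := fun θ hθ => by
    rw [min_eq_left pi_pos.le, max_eq_right pi_pos.le] at hθ
    exact neg_nonpos.2 <| mul_nonneg (by linarith)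
      (sin_nonneg_of_nonneg_of_le_pi hθ.1.le hθ.2.le)
  have := intervalIntegral.integral_comp_mul_deriv_of_deriv_nonpos (g := f)
    continuous_affineCos.continuousOn (fun θ _ => hderiv θ) hnonpos
  rw [show affineCos α β 0 = β by rw [affineCos, cos_zero]; ring,
    show affineCos α β π = α by rw [affineCos, cos_pi]; ring,
    intervalIntegral.integral_symm α β] at this
  rw [← intervalIntegral.integral_const_mul]
  linarith [show ∫ θ in 0..π, (f ∘ affineCos α β) θ * -((β - α) / 2 * sin θ)
      = -∫ θ in 0..π, (β - α) / 2 * (f (affineCos α β θ) * sin θ) by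
    rw [← intervalIntegral.integral_neg]
    congr 1 with θ
    simp only [Function.comp_apply]
    ring]

end Substitution

section CosineMoments

open Matrix

noncomputable def cosMoment (g : ℝ → ℝ) (k : ℕ) : ℝ := ∫ θ in 0..π, cos (k * θ) * g θ

lemma isHermitian_toepFin {d : ℕ} (y : Fin (d + 1) → ℝ) : (toepFin d y).IsHermitian := by
  ext i j
  simp only [Matrix.conjTranspose_apply, star_trivial, toepFin]
  congr 2
  omega

lemma toepFin_cosMoment_apply {d : ℕ} (g : ℝ → ℝ) (i j : Fin (d + 1)) :
    toepFin d (fun k => cosMoment g k) i j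
      = ∫ θ in 0..π, (cos (i * θ) * cos (j * θ) + sin (i * θ) * sin (j * θ)) * g θ := by
  refine intervalIntegral.integral_congr fun θ _ => ?_
  have hcos : cos ((((i : ℤ) - j).natAbs : ℕ) * θ) = cos (((i : ℝ) - j) * θ) := by
    rw [Nat.cast_natAbs, Int.cast_abs]
    push_cast
    rcases abs_choice ((i : ℝ) - j) with h | h <;> simp only [h, neg_mul, cos_neg]
  simp only [hcos, sub_mul, cos_sub]

lemma dotProduct_toepFin_cosMoment_mulVec {d : ℕ} {g : ℝ → ℝ}
    (hg : IntervalIntegrable g volume 0 π) (x : Fin (d + 1) → ℝ) :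
    x ⬝ᵥ (toepFin d (fun k => cosMoment g k) *ᵥ x)
      = ∫ θ in 0..π, ((∑ i, x i * cos (i * θ)) ^ 2 + (∑ i, x i * sin (i * θ)) ^ 2) * g θ := by
  set K : Fin (d + 1) → Fin (d + 1) → ℝ → ℝ :=
    fun i j θ => (cos (i * θ) * cos (j * θ) + sin (i * θ) * sin (j * θ)) * g θ
  have hK : ∀ i j, IntervalIntegrable (fun θ => x i * x j * K i j θ) volume 0 π :=
    fun i j => (hg.continuousOn_mul (by fun_prop)).const_mul _
  calc x ⬝ᵥ (toepFin d (fun k => cosMoment g k) *ᵥ x)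
      = ∑ i, ∑ j, ∫ θ in 0..π, x i * x j * K i j θ := by
        simp only [dotProduct, Matrix.mulVec, Finset.mul_sum, toepFin_cosMoment_apply,
          intervalIntegral.integral_const_mul]
        exact Finset.sum_congr rfl fun i _ => Finset.sum_congr rfl fun j _ => by ring
    _ = ∫ θ in 0..π, ∑ i, ∑ j, x i * x j * K i j θ := by
        rw [intervalIntegral.integral_finsetSum (f := fun i θ => ∑ j, x i * x j * K i j θ)
          fun i _ => by simpa only [Finset.sum_fn] using IntervalIntegrable.sum _ fun j _ => hK i j]
        exact Finset.sum_congr rfl fun i _ =>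
          (intervalIntegral.integral_finsetSum fun j _ => hK i j).symm
    _ = _ := intervalIntegral.integral_congr fun θ _ => by
        rw [sq, sq, Finset.sum_mul_sum, Finset.sum_mul_sum, ← Finset.sum_add_distrib,
          Finset.sum_mul]
        refine Finset.sum_congr rfl fun i _ => ?_
        rw [← Finset.sum_add_distrib, Finset.sum_mul]
        exact Finset.sum_congr rfl fun j _ => by ring

theorem posSemidef_toepFin_cosMoment {d : ℕ} {g : ℝ → ℝ}
    (hg : IntervalIntegrable g volume 0 π) (hg0 : ∀ θ ∈ Icc 0 π, 0 ≤ g θ) :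
    (toepFin d fun k => cosMoment g k).PosSemidef := by
  refine .of_dotProduct_mulVec_nonneg (isHermitian_toepFin _) fun x => ?_
  rw [star_trivial, dotProduct_toepFin_cosMoment_mulVec hg]
  exact intervalIntegral.integral_nonneg pi_pos.le fun θ hθ =>
    mul_nonneg (by positivity) (hg0 θ hθ)

lemma cosMoment_posPart_sub_negPart {g : ℝ → ℝ} (hg : Continuous g) (k : ℕ) :
    cosMoment g⁺ k - cosMoment g⁻ k = cosMoment g k := by
  have hpos : Continuous g⁺ := hg.sup continuous_const
  have hneg : Continuous g⁻ := hg.neg.sup continuous_const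
  rw [cosMoment, cosMoment, ← intervalIntegral.integral_sub
    ((hpos.intervalIntegrable 0 π).continuousOn_mul (by fun_prop))
    ((hneg.intervalIntegrable 0 π).continuousOn_mul (by fun_prop))]
  simp only [← mul_sub, Pi.posPart_apply, Pi.negPart_apply, posPart_sub_negPart, cosMoment]

lemma cosMoment_posPart_add_negPart_zero {g : ℝ → ℝ} (hg : Continuous g) :
    cosMoment g⁺ 0 + cosMoment g⁻ 0 = ∫ θ in 0..π, |g θ| := by
  have hpos : Continuous g⁺ := hg.sup continuous_const
  have hneg : Continuous g⁻ := hg.neg.sup continuous_const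
  simp only [cosMoment, Nat.cast_zero, zero_mul, cos_zero, one_mul]
  rw [← intervalIntegral.integral_add (hpos.intervalIntegrable 0 π) (hneg.intervalIntegrable 0 π)]
  simp only [Pi.posPart_apply, Pi.negPart_apply, posPart_add_negPart]

lemma posSemidef_toepFin_cosMoment_posPart_negPart {d : ℕ} {g : ℝ → ℝ} (hg : Continuous g) :
    (toepFin d fun k => cosMoment g⁺ k).PosSemidef ∧
      (toepFin d fun k => cosMoment g⁻ k).PosSemidef :=
  ⟨posSemidef_toepFin_cosMoment ((hg.sup continuous_const).intervalIntegrable 0 π)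
      fun θ _ => posPart_nonneg (g θ),
    posSemidef_toepFin_cosMoment ((hg.neg.sup continuous_const).intervalIntegrable 0 π)
      fun θ _ => negPart_nonneg (g θ)⟩

lemma apply_zero_nonneg_of_posSemidef_toepFin {d : ℕ} {y : Fin (d + 1) → ℝ}
    (h : (toepFin d y).PosSemidef) : 0 ≤ y 0 := by
  simpa [toepFin] using h.diag_nonneg (i := 0)

end CosineMoments

section TransplantDensity

variable {α β : ℝ} {w : ℝ → ℝ}

/-- The function on `[0, π]` whose cosine moments are the entries of `J^{ℓ,d} W^ℓ p`. -/
noncomputable def transplantDensity (α β : ℝ) (w : ℝ → ℝ) (P : ℝ[X]) (θ : ℝ) : ℝ :=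
  P.eval (affineCos α β θ) * sin θ / w (affineCos α β θ)

lemma continuous_comp_affineCos (hαβ : α ≤ β) (hw : ContinuousOn w (Icc α β)) :
    Continuous fun θ => w (affineCos α β θ) :=
  hw.comp_continuous continuous_affineCos (affineCos_mem_Icc hαβ)

lemma continuous_transplantDensity (hαβ : α ≤ β) (hw : ContinuousOn w (Icc α β))
    (hw0 : ∀ x ∈ Icc α β, w x ≠ 0) (P : ℝ[X]) : Continuous (transplantDensity α β w P) :=
  ((P.continuous.comp continuous_affineCos).mul continuous_sin).div
    (continuous_comp_affineCos hαβ hw) fun θ => hw0 _ (affineCos_mem_Icc hαβ θ)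

theorem cosMoment_transplantDensity (hαβ : α ≤ β) (hw : ContinuousOn w (Icc α β))
    (hw0 : ∀ x ∈ Icc α β, w x ≠ 0) {P : ℝ[X]} {N : ℕ} {q : Fin (N + 1) → ℝ}
    (hq : transplant α β P = ∑ n : Fin (N + 1), C (q n) * Chebyshev.U ℝ ((n : ℕ) : ℤ)) (k : ℕ) :
    cosMoment (transplantDensity α β w P) k = ∑ n : Fin (N + 1), Jent α β w k n * q n := by
  have hpt : ∀ θ, cos (k * θ) * transplantDensity α β w P θ
      = ∑ n : Fin (N + 1), cos (k * θ) * sin ((n + 1) * θ) / w (affineCos α β θ) * q n := by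
    intro θ
    rw [transplantDensity, ← eval_transplant_cos, hq, eval_finsetSum, Finset.sum_mul,
      Finset.sum_div, Finset.mul_sum]
    refine Finset.sum_congr rfl fun n _ => ?_
    rw [eval_mul, eval_C, mul_assoc, Chebyshev.U_real_cos]
    push_cast
    ring
  have hint : ∀ n : ℕ, IntervalIntegrable
      (fun θ => cos (k * θ) * sin ((n + 1) * θ) / w (affineCos α β θ)) volume 0 π :=
    fun n => (by fun_prop : Continuous fun θ => cos (k * θ) * sin ((n + 1) * θ)).div
      (continuous_comp_affineCos hαβ hw) (fun θ => hw0 _ (affineCos_mem_Icc hαβ θ))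
      |>.intervalIntegrable 0 π
  rw [cosMoment, intervalIntegral.integral_congr fun θ _ => hpt θ,
    intervalIntegral.integral_finsetSum fun (n : Fin (N + 1)) _ => (hint n).mul_const (q n)]
  simp only [intervalIntegral.integral_mul_const]
  rfl

theorem integral_abs_transplantDensity (hαβ : α ≤ β) (hw0 : ∀ x ∈ Icc α β, 0 < w x)
    (P : ℝ[X]) :
    (β - α) / 2 * ∫ θ in 0..π, |transplantDensity α β w P θ| = ∫ t in α..β, |P.eval t| / w t := by
  rw [← integral_comp_affineCos_mul_sin hαβ fun t => |P.eval t| / w t]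
  congr 1
  refine intervalIntegral.integral_congr fun θ hθ => ?_
  rw [uIcc_of_le pi_pos.le] at hθ
  simp only [transplantDensity, abs_div, abs_mul,
    abs_of_nonneg (sin_nonneg_of_nonneg_of_le_pi hθ.1 hθ.2),
    abs_of_pos (hw0 _ (affineCos_mem_Icc hαβ θ))]
  ring

end TransplantDensity

section ErsatzNorm

variable {L N d : ℕ} {a b : ℕ → ℝ} {w : ℝ → ℝ} {P : ℝ[X]}

lemma ersatz_le_of_feasible (hab : ∀ ℓ < L, a ℓ ≤ b ℓ) {q : ℕ → Fin (N + 1) → ℝ}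
    (hq : ∀ ℓ < L, transplant (a ℓ) (b ℓ) P
      = ∑ n : Fin (N + 1), C (q ℓ n) * Chebyshev.U ℝ ((n : ℕ) : ℤ))
    {yp ym : ℕ → Fin (d + 1) → ℝ}
    (hmom : ∀ ℓ < L, ∀ k : Fin (d + 1),
      yp ℓ k - ym ℓ k = ∑ n : Fin (N + 1), Jent (a ℓ) (b ℓ) w k n * q ℓ n)
    (hpsd : ∀ ℓ < L, (toepFin d (yp ℓ)).PosSemidef ∧ (toepFin d (ym ℓ)).PosSemidef) :
    ersatz L N d a b w P ≤ ∑ ℓ ∈ Finset.range L, (b ℓ - a ℓ) / 2 * (yp ℓ 0 + ym ℓ 0) := by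
  refine csInf_le ⟨0, ?_⟩ ⟨q, hq, yp, ym, hmom, hpsd, rfl⟩
  rintro _ ⟨-, -, yp, ym, -, hpsd, rfl⟩
  refine Finset.sum_nonneg fun ℓ hℓ => ?_
  replace hℓ := Finset.mem_range.1 hℓ
  exact mul_nonneg (by linarith [hab ℓ hℓ])
    (add_nonneg (apply_zero_nonneg_of_posSemidef_toepFin (hpsd ℓ hℓ).1)
      (apply_zero_nonneg_of_posSemidef_toepFin (hpsd ℓ hℓ).2))

theorem ersatz_le_L1K (hab : ∀ ℓ < L, a ℓ ≤ b ℓ)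
    (hw : ContinuousOn w (⋃ ℓ ∈ Finset.range L, Icc (a ℓ) (b ℓ)))
    (hwpos : ∀ x ∈ ⋃ ℓ ∈ Finset.range L, Icc (a ℓ) (b ℓ), 0 < w x)
    (hP : P.natDegree ≤ N) : ersatz L N d a b w P ≤ L1K L a b w P := by
  have hIcc : ∀ ℓ < L, Icc (a ℓ) (b ℓ) ⊆ ⋃ ℓ ∈ Finset.range L, Icc (a ℓ) (b ℓ) :=
    fun ℓ hℓ => subset_biUnion_of_mem (u := fun ℓ => Icc (a ℓ) (b ℓ)) (Finset.mem_range.2 hℓ)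
  have hwℓ : ∀ ℓ < L, ContinuousOn w (Icc (a ℓ) (b ℓ)) := fun ℓ hℓ => hw.mono (hIcc ℓ hℓ)
  have hposℓ : ∀ ℓ < L, ∀ x ∈ Icc (a ℓ) (b ℓ), 0 < w x :=
    fun ℓ hℓ x hx => hwpos x (hIcc ℓ hℓ hx)
  have hF : ∀ ℓ < L, Continuous (transplantDensity (a ℓ) (b ℓ) w P) := fun ℓ hℓ =>
    continuous_transplantDensity (hab ℓ hℓ) (hwℓ ℓ hℓ) (fun x hx => (hposℓ ℓ hℓ x hx).ne') P
  choose q hq using fun ℓ =>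
    Chebyshev.exists_sum_C_mul_U_eq ((natDegree_transplant_le (α := a ℓ) (β := b ℓ) P).trans hP)
  refine (ersatz_le_of_feasible hab (fun ℓ _ => hq ℓ)
    (yp := fun ℓ k => cosMoment (transplantDensity (a ℓ) (b ℓ) w P)⁺ k)
    (ym := fun ℓ k => cosMoment (transplantDensity (a ℓ) (b ℓ) w P)⁻ k) (fun ℓ hℓ k => ?_)
    (fun ℓ hℓ => posSemidef_toepFin_cosMoment_posPart_negPart (hF ℓ hℓ))).trans_eq
    (Finset.sum_congr rfl fun ℓ hℓ => ?_)
  · rw [cosMoment_posPart_sub_negPart (hF ℓ hℓ), cosMoment_transplantDensity (hab ℓ hℓ)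
      (hwℓ ℓ hℓ) (fun x hx => (hposℓ ℓ hℓ x hx).ne') (hq ℓ)]
  · replace hℓ := Finset.mem_range.1 hℓ
    rw [Fin.val_zero, cosMoment_posPart_add_negPart_zero (hF ℓ hℓ),
      integral_abs_transplantDensity (hab ℓ hℓ) (hposℓ ℓ hℓ)]

end ErsatzNorm

theorem ersatz_sandwich_general
    (L : ℕ) (a b : ℕ → ℝ)
    (hab : ∀ ℓ < L, a ℓ < b ℓ)
    (w : ℝ → ℝ)
    (hw : ContinuousOn w (⋃ ℓ ∈ Finset.range L, Set.Icc (a ℓ) (b ℓ)))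
    (hwpos : ∀ x ∈ ⋃ ℓ ∈ Finset.range L, Set.Icc (a ℓ) (b ℓ), 0 < w x)
    (N : ℕ) (d : ℕ)
    (V : Polynomial ℝ) (hVmonic : V.Monic) (hVdeg : V.natDegree = N)
    (hVmin : ∀ Q : Polynomial ℝ, Q.Monic → Q.natDegree = N →
      ersatz L N d a b w V ≤ ersatz L N d a b w Q)
    (U : Polynomial ℝ) (hUmonic : U.Monic) (hUdeg : U.natDegree = N)
    (hUmin : ∀ Q : Polynomial ℝ, Q.Monic → Q.natDegree = N →
      L1K L a b w U ≤ L1K L a b w Q) :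
    ersatz L N d a b w V ≤ L1K L a b w U ∧ L1K L a b w U ≤ L1K L a b w V :=
  ⟨(hVmin U hUmonic hUdeg).trans (ersatz_le_L1K (fun ℓ hℓ => (hab ℓ hℓ).le) hw hwpos hUdeg.le),
    hUmin V hVmonic hVdeg⟩

/-- If `V` minimizes `⫽·⫽_d` (`d ≥ N`) and `U` minimizes `‖·/w‖_{L1(K)}` among monic
polynomials of degree `N`, then `⫽V⫽_d ≤ ‖U/w‖_{L1(K)} ≤ ‖V/w‖_{L1(K)}`. -/
theorem ersatz_sandwich
    (L : ℕ) (hL : 0 < L) (a b : ℕ → ℝ)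
    (ha0 : a 0 = -1) (hbL : b (L - 1) = 1)
    (hab : ∀ ℓ < L, a ℓ < b ℓ)
    (hgap : ∀ ℓ, ℓ + 1 < L → b ℓ < a (ℓ + 1))
    (w : ℝ → ℝ)
    (hw : ContinuousOn w (⋃ ℓ ∈ Finset.range L, Set.Icc (a ℓ) (b ℓ)))
    (hwpos : ∀ x ∈ ⋃ ℓ ∈ Finset.range L, Set.Icc (a ℓ) (b ℓ), 0 < w x)
    (N : ℕ) (hN : 1 ≤ N) (d : ℕ) (hd : N ≤ d)
    (V : Polynomial ℝ) (hVmonic : V.Monic) (hVdeg : V.natDegree = N)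
    (hVmin : ∀ Q : Polynomial ℝ, Q.Monic → Q.natDegree = N →
      ersatz L N d a b w V ≤ ersatz L N d a b w Q)
    (U : Polynomial ℝ) (hUmonic : U.Monic) (hUdeg : U.natDegree = N)
    (hUmin : ∀ Q : Polynomial ℝ, Q.Monic → Q.natDegree = N →
      L1K L a b w U ≤ L1K L a b w Q) :
    ersatz L N d a b w V ≤ L1K L a b w U ∧ L1K L a b w U ≤ L1K L a b w V :=
  ersatz_sandwich_general L a b hab w hw hwpos N d V hVmonic hVdeg hVmin U hUmonic hUdeg hUmin
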